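/- arXiv:2201.08521 — 3 statements merged into one kernel-verified Lean document; each statement's English description precedes it below -/
import Mathlib

section
/- Let K be a point set of type (a,b,c)_{n-1} in PG(n,q) with n ≥ 2 and a, b, c pairwise distinct. Then t_a·(b−a)(c−a) = k²·θ_{n-2} − k·(θ_{n-2} + (b+c−1)·θ_{n-1}) + bc·θ_n, t_b·(c−b)(a−b) = k²·θ_{n-2} − k·(θ_{n-2} + (a+c−1)·θ_{n-1}) + ac·θ_n, and t_c·(a−c)(b−c) = k²·θ_{n-2} − k·(θ_{n-2} + (a+b−1)·θ_{n-1}) + ab·θ_n (as identities of integers, where the left-hand sides may involve negative factors). -/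
open Module Set

noncomputable section

variable (F : Type) [Field F]

/-- The point set of `PG(n,q)`: the projectivization of `GF(q)^{n+1}`. -/
abbrev PGPoint (n : ℕ) := Projectivization F (Fin (n + 1) → F)

/-- The set of points of the projective space lying in (the projectivization of)
a linear subspace `W`. A `d`-dimensional projective subspace corresponds to a
submodule `W` with `finrank F W = d + 1`; hyperplanes correspond to `finrank F W = n`. -/
def projSet (n : ℕ) (W : Submodule F (Fin (n + 1) → F)) : Set (PGPoint F n) :=
  {x | x.submodule ≤ W}

/-- `θ_m = (q^{m+1} - 1)/(q - 1)`, the number of points of `PG(m,q)`. -/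
def theta (q m : ℕ) : ℕ := (q ^ (m + 1) - 1) / (q - 1)

/-- `K` is of type `(a,b,c)_{n-1}`: every hyperplane meets `K` in `a`, `b` or `c`
points, and each of the three values is attained by some hyperplane. -/
def IsType3 (n : ℕ) (K : Set (PGPoint F n)) (a b c : ℕ) : Prop :=
  (∀ W : Submodule F (Fin (n + 1) → F), finrank F W = n →
      (K ∩ projSet F n W).ncard = a ∨ (K ∩ projSet F n W).ncard = b ∨
        (K ∩ projSet F n W).ncard = c) ∧
  (∃ W : Submodule F (Fin (n + 1) → F), finrank F W = n ∧ (K ∩ projSet F n W).ncard = a) ∧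
  (∃ W : Submodule F (Fin (n + 1) → F), finrank F W = n ∧ (K ∩ projSet F n W).ncard = b) ∧
  (∃ W : Submodule F (Fin (n + 1) → F), finrank F W = n ∧ (K ∩ projSet F n W).ncard = c)

/-- `tnum K m`: the number of hyperplanes meeting `K` in exactly `m` points. -/
def tnum (n : ℕ) (K : Set (PGPoint F n)) (m : ℕ) : ℕ :=
  {W : Submodule F (Fin (n + 1) → F) | finrank F W = n ∧ (K ∩ projSet F n W).ncard = m}.ncard

/-!
Double counting incidences between the points of `K` and the hyperplanes gives the standard
equations `∑_H 1 = θ_n`, `∑_H |H ∩ K| = k θ_{n-1}` and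
`∑_H |H ∩ K|² = k θ_{n-1} + k (k - 1) θ_{n-2}`: the hyperplanes through a subspace `U` are the
points of the dual annihilator of `U`, so there are `θ_{n-1}` of them through a point and
`θ_{n-2}` through two distinct points. In `∑_H (|H ∩ K| - b) (|H ∩ K| - c)` only the hyperplanes
with `|H ∩ K| = a` contribute, each with `(a - b) (a - c)`; expanding the sum with the standard
equations gives the formula for `t_a`, and those for `t_b`, `t_c` follow by symmetry.
-/

open Finset
open scoped LinearAlgebra.Projectivization

theorem Finset.card_filter_mul_sub_mul_sub {β : Type*} (R : Type*) [CommRing R]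
    {t : Finset β} {g : β → ℕ} {a b c : ℕ} (hg : ∀ x ∈ t, g x = a ∨ g x = b ∨ g x = c) :
    (#{x ∈ t | g x = a} : R) * (b - a) * (c - a) =
      ∑ x ∈ t, ((g x : R) - b) * ((g x : R) - c) := by
  have hterm : ∀ x ∈ t, ((g x : R) - b) * ((g x : R) - c) =
      if g x = a then ((a : R) - b) * ((a : R) - c) else 0 := by
    intro x hx
    split_ifs with ha
    · rw [ha]
    · rcases hg x hx with h | h | h
      · exact absurd h ha
      all_goals simp [h]
  rw [sum_congr rfl hterm, sum_ite, sum_const_zero, add_zero, sum_const, nsmul_eq_mul]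
  ring

theorem Finset.sum_card_filter_sq {α β : Type*} [DecidableEq α] (r : α → β → Prop)
    [∀ a b, Decidable (r a b)] {s : Finset α} {t : Finset β} {l₁ l₂ : ℕ}
    (h₁ : ∀ a ∈ s, #{b ∈ t | r a b} = l₁)
    (h₂ : ∀ a ∈ s, ∀ a' ∈ s, a ≠ a' → #{b ∈ t | r a b ∧ r a' b} = l₂) :
    ∑ b ∈ t, (#{a ∈ s | r a b} : ℤ) ^ 2 = #s * l₁ + #s * (#s - 1) * l₂ := by
  have hsq : ∀ b ∈ t, (#{a ∈ s | r a b} : ℤ) ^ 2 = #{p ∈ s ×ˢ s | r p.1 b ∧ r p.2 b} := by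
    intro b _
    rw [filter_product (r · b) (r · b), card_product, sq, Nat.cast_mul]
  have hpair : ∀ p ∈ s ×ˢ s, (#{b ∈ t | r p.1 b ∧ r p.2 b} : ℤ)
      = l₂ + if p.1 = p.2 then (l₁ - l₂ : ℤ) else 0 := by
    rintro ⟨a, a'⟩ hp
    obtain ⟨ha, ha'⟩ := mem_product.mp hp
    split_ifs with h
    · simp only at h
      subst h
      simp [h₁ a ha]
    · simp [h₂ a ha a' ha' h]
  have hswap := sum_card_bipartiteAbove_eq_sum_card_bipartiteBelow
    (fun (p : α × α) b => r p.1 b ∧ r p.2 b) (s := s ×ˢ s) (t := t)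
  simp only [bipartiteAbove, bipartiteBelow] at hswap
  rw [sum_congr rfl hsq, ← Nat.cast_sum, ← hswap, Nat.cast_sum, sum_congr rfl hpair,
    sum_add_distrib, sum_const, card_product, sum_product]
  simp only [sum_ite_eq, sum_ite_mem, inter_self, sum_const, nsmul_eq_mul]
  push_cast
  ring

instance Submodule.finite_of_finite {R M : Type*} [Semiring R] [AddCommMonoid M] [Module R M]
    [Finite M] : Finite (Submodule R M) :=
  Finite.of_injective _ SetLike.coe_injective

theorem theta_eq_sum_range_pow {q : ℕ} (hq : 2 ≤ q) (m : ℕ) :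
    theta q m = ∑ i ∈ range (m + 1), q ^ i :=
  (Nat.geomSum_eq hq _).symm

theorem Projectivization.finrank_sup_submodule_of_ne {F V : Type*} [Field F] [AddCommGroup V]
    [Module F V] {x y : ℙ F V} (hxy : x ≠ y) : finrank F ↥(x.submodule ⊔ y.submodule) = 2 := by
  have hx := Submodule.isAtom_iff_finrank_eq_one.mpr x.finrank_submodule
  have hy := Submodule.isAtom_iff_finrank_eq_one.mpr y.finrank_submodule
  have hinf : x.submodule ⊓ y.submodule = ⊥ :=
    (hx.disjoint_of_ne hy (Projectivization.submodule_injective.ne hxy)).eq_bot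
  have := Submodule.finrank_sup_add_finrank_inf_eq x.submodule y.submodule
  rw [hinf, finrank_bot, x.finrank_submodule, y.finrank_submodule] at this
  omega

section Hyperplanes

variable {F V : Type*} [Field F] [AddCommGroup V] [Module F V] [FiniteDimensional F V] {n : ℕ}

def hyperplanesAboveEquiv (hV : finrank F V = n + 1) (U : Submodule F V) :
    {W : Submodule F V // finrank F W = n ∧ U ≤ W} ≃ ℙ F U.dualAnnihilator :=
  let A := U.dualAnnihilator
  let toLine : {W : Submodule F V // finrank F W = n ∧ U ≤ W} ≃
      {L : Submodule F (Dual F V) // finrank F L = 1 ∧ L ≤ A} :=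
    ((Subspace.orderIsoFiniteDimensional (K := F) (V := V)).toEquiv.trans
      OrderDual.ofDual).subtypeEquiv fun W => by
        have := Subspace.finrank_add_finrank_dualAnnihilator_eq W
        exact and_congr (show finrank F W = n ↔ finrank F W.dualAnnihilator = 1 by omega)
          Subspace.dualAnnihilator_le_dualAnnihilator_iff.symm
  let inA : {L : Submodule F A // finrank F L = 1} ≃
      {L : Submodule F (Dual F V) // finrank F L = 1 ∧ L ≤ A} :=
    ((Submodule.MapSubtype.orderIso A).toEquiv.subtypeEquiv fun L =>
        (Submodule.finrank_map_subtype_eq A L).symm ▸ Iff.rfl).trans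
      ((Equiv.subtypeSubtypeEquivSubtypeInter _ _).trans
        (Equiv.subtypeEquivRight fun _ => and_comm))
  toLine.trans (inA.symm.trans (Projectivization.equivSubmodule F A).symm)

theorem natCard_hyperplanes_above [Finite F] (hV : finrank F V = n + 1)
    {U : Submodule F V} (hU : finrank F U ≤ n) :
    Nat.card {W : Submodule F V // finrank F W = n ∧ U ≤ W} =
      theta (Nat.card F) (n - finrank F U) := by
  have := Subspace.finrank_add_finrank_dualAnnihilator_eq U
  rw [Nat.card_congr (hyperplanesAboveEquiv hV U),
    Projectivization.card_of_finrank F _ (show _ = n - finrank F U + 1 by omega),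
    theta_eq_sum_range_pow Finite.one_lt_card]

variable [Finite F] [Fintype (Submodule F V)]

open scoped Classical in
theorem card_hyperplanes_above (hV : finrank F V = n + 1) {U : Submodule F V}
    (hU : finrank F U ≤ n) :
    #{W : Submodule F V | finrank F W = n ∧ U ≤ W} = theta (Nat.card F) (n - finrank F U) := by
  rw [← natCard_hyperplanes_above hV hU, Nat.card_eq_fintype_card, Fintype.card_subtype]

open scoped Classical in
theorem sum_card_points_on_hyperplanes (hV : finrank F V = n + 1) (hn : 1 ≤ n)
    (P : Finset (ℙ F V)) :
    ∑ W ∈ {W : Submodule F V | finrank F W = n}, (#{x ∈ P | x.submodule ≤ W} : ℤ) =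
      #P * theta (Nat.card F) (n - 1) := by
  have hx (x : ℙ F V) : #{W ∈ {W : Submodule F V | finrank F W = n} | x.submodule ≤ W} =
      theta (Nat.card F) (n - 1) := by
    rw [filter_filter, card_hyperplanes_above hV (by rw [x.finrank_submodule]; omega),
      x.finrank_submodule]
  have := sum_card_bipartiteAbove_eq_sum_card_bipartiteBelow
    (fun (x : ℙ F V) W => x.submodule ≤ W) (s := P) (t := {W : Submodule F V | finrank F W = n})
  simp only [bipartiteAbove, bipartiteBelow, hx, sum_const, smul_eq_mul] at this
  exact_mod_cast this.symm

open scoped Classical in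
theorem sum_sq_card_points_on_hyperplanes (hV : finrank F V = n + 1) (hn : 2 ≤ n)
    (P : Finset (ℙ F V)) :
    ∑ W ∈ {W : Submodule F V | finrank F W = n}, (#{x ∈ P | x.submodule ≤ W} : ℤ) ^ 2 =
      #P * theta (Nat.card F) (n - 1) + #P * (#P - 1) * theta (Nat.card F) (n - 2) := by
  refine sum_card_filter_sq _ (fun x _ => ?_) (fun x _ y _ hxy => ?_)
  · rw [filter_filter, card_hyperplanes_above hV (by rw [x.finrank_submodule]; omega),
      x.finrank_submodule]
  · simp_rw [filter_filter, ← sup_le_iff]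
    have h2 := Projectivization.finrank_sup_submodule_of_ne hxy
    rw [card_hyperplanes_above hV (by omega), h2]

open scoped Classical in
theorem card_hyperplanes_meeting_mul_sub_mul_sub (hV : finrank F V = n + 1) (hn : 2 ≤ n)
    (P : Finset (ℙ F V)) {a b c : ℕ}
    (hP : ∀ W : Submodule F V, finrank F W = n → #{x ∈ P | x.submodule ≤ W} = a ∨
      #{x ∈ P | x.submodule ≤ W} = b ∨ #{x ∈ P | x.submodule ≤ W} = c) :
    (#{W : Submodule F V | finrank F W = n ∧ #{x ∈ P | x.submodule ≤ W} = a} : ℤ) *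
        ((b : ℤ) - a) * ((c : ℤ) - a) =
      (#P : ℤ) ^ 2 * theta (Nat.card F) (n - 2) -
        #P * (theta (Nat.card F) (n - 2) + ((b : ℤ) + c - 1) * theta (Nat.card F) (n - 1)) +
        (b : ℤ) * c * theta (Nat.card F) n := by
  have h0 : #{W : Submodule F V | finrank F W = n} = theta (Nat.card F) n := by
    simpa using card_hyperplanes_above hV (U := ⊥) (by simp)
  have h1 := sum_card_points_on_hyperplanes hV (by omega) P
  have h2 := sum_sq_card_points_on_hyperplanes hV hn P
  rw [← filter_filter, card_filter_mul_sub_mul_sub ℤ fun W hW => hP W (mem_filter.mp hW).2]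
  simp only [sub_mul, mul_sub, sum_sub_distrib, ← sq, ← sum_mul, ← mul_sum, sum_const,
    nsmul_eq_mul, h0]
  linear_combination h2 - ((b : ℤ) + c) * h1

end Hyperplanes

open scoped Classical in
theorem ncard_inter_projSet {n : ℕ} {K : Set (PGPoint F n)} (hK : K.Finite)
    (W : Submodule F (Fin (n + 1) → F)) :
    (K ∩ projSet F n W).ncard = #{x ∈ hK.toFinset | x.submodule ≤ W} := by
  rw [Set.ncard_eq_toFinset_card _ (hK.inter_of_left _)]
  congr 1
  ext x
  simp [projSet]

theorem tnum_mul_sub_mul_sub [Fintype F] {n : ℕ} (hn : 2 ≤ n) (K : Set (PGPoint F n))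
    {a b c : ℕ}
    (hK : ∀ W : Submodule F (Fin (n + 1) → F), finrank F W = n →
      (K ∩ projSet F n W).ncard = a ∨ (K ∩ projSet F n W).ncard = b ∨
        (K ∩ projSet F n W).ncard = c) :
    (tnum F n K a : ℤ) * ((b : ℤ) - a) * ((c : ℤ) - a) =
      (K.ncard : ℤ) ^ 2 * (theta (Fintype.card F) (n - 2) : ℤ) -
        (K.ncard : ℤ) * ((theta (Fintype.card F) (n - 2) : ℤ) +
          ((b : ℤ) + c - 1) * (theta (Fintype.card F) (n - 1) : ℤ)) +
        (b : ℤ) * c * (theta (Fintype.card F) n : ℤ) := by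
  classical
  have := Fintype.ofFinite (Submodule F (Fin (n + 1) → F))
  have hfin := K.toFinite
  simp only [ncard_inter_projSet F hfin] at hK
  have htnum : tnum F n K a =
      #{W : Submodule F (Fin (n + 1) → F) | finrank F W = n ∧
        #{x ∈ hfin.toFinset | x.submodule ≤ W} = a} := by
    rw [tnum, Set.ncard_eq_toFinset_card', Set.toFinset_ofPred]
    simp only [ncard_inter_projSet F hfin]
  rw [htnum, Set.ncard_eq_toFinset_card K hfin, ← Nat.card_eq_fintype_card]
  exact card_hyperplanes_meeting_mul_sub_mul_sub (by simp) hn _ hK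

theorem statement3 [Fintype F] (q n a b c : ℕ) (hn : 2 ≤ n) (hq : Fintype.card F = q)
    (K : Set (PGPoint F n)) (hK : IsType3 F n K a b c) :
    (tnum F n K a : ℤ) * ((b : ℤ) - a) * ((c : ℤ) - a)
        = (K.ncard : ℤ) ^ 2 * (theta q (n - 2) : ℤ)
          - (K.ncard : ℤ) * ((theta q (n - 2) : ℤ) + ((b : ℤ) + c - 1) * (theta q (n - 1) : ℤ))
          + (b : ℤ) * c * (theta q n : ℤ) ∧
    (tnum F n K b : ℤ) * ((c : ℤ) - b) * ((a : ℤ) - b)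
        = (K.ncard : ℤ) ^ 2 * (theta q (n - 2) : ℤ)
          - (K.ncard : ℤ) * ((theta q (n - 2) : ℤ) + ((a : ℤ) + c - 1) * (theta q (n - 1) : ℤ))
          + (a : ℤ) * c * (theta q n : ℤ) ∧
    (tnum F n K c : ℤ) * ((a : ℤ) - c) * ((b : ℤ) - c)
        = (K.ncard : ℤ) ^ 2 * (theta q (n - 2) : ℤ)
          - (K.ncard : ℤ) * ((theta q (n - 2) : ℤ) + ((a : ℤ) + b - 1) * (theta q (n - 1) : ℤ))
          + (a : ℤ) * b * (theta q n : ℤ) := by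
  subst hq
  have hval := hK.1
  refine ⟨tnum_mul_sub_mul_sub F hn K hval, ?_, ?_⟩
  · linear_combination tnum_mul_sub_mul_sub F hn K fun W hW => (hval W hW).rotate
  · linear_combination tnum_mul_sub_mul_sub F hn K fun W hW => (hval W hW).rotate.rotate
end
end

section
/- Let V be an m-dimensional subspace of PG(n,q) and let K be a set of points of PG(n,q) such that there is a fixed number t with |K ∩ H| = t for every hyperplane H of PG(n,q) not containing V. Then K ∪ V is a cone with vertex V, i.e. for every point P ∈ V and every point Q ∈ K ∪ V, every point of the line PQ lies in K ∪ V. -/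
/-
Let `Q ∈ K` lie outside `V` and let `x ∉ V` lie on a line `PQ` with `P ∈ V`, so that
`⟨x, V⟩ = ⟨Q, V⟩`. For a point `R`, count the pairs `(y, H)` with `y ∈ K` and `H` a hyperplane
through `R` and `y` not containing `V`: as each such `H` meets `K` in `t` points, the count is
`t · N(R)`, where `N(U)` is the number of hyperplanes through `U` not containing `V`. Since the
linear group acts transitively on subspaces of a given dimension, `N(U)` only depends on `dim U`
and `U + V`. Hence `N(x) = N(Q)` and `N(x + y) = N(Q + y)` for `y ∈ K \ {x, Q}`, and comparing the
counts for `x` and `Q` leaves `N(x + Q) = N(Q)` unless `x ∈ K`; but some hyperplane through `Q`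
misses `x`, and it cannot contain `V`.
-/

open Module Set

noncomputable section

variable (F : Type) [Field F]

open Finset

theorem IsAtom.sup_eq_sup_of_le_sup {α : Type*} [Lattice α] [OrderBot α] [IsUpperModularLattice α]
    {p q v x : α} (hq : IsAtom q) (hpv : p ≤ v) (hx : x ≤ p ⊔ q) (hxv : ¬ x ≤ v) :
    x ⊔ v = q ⊔ v := by
  have hxqv : x ⊔ v ≤ q ⊔ v := sup_le (hx.trans (sup_le (hpv.trans le_sup_right) le_sup_left))
    le_sup_right
  have hqv : q ⊓ v = ⊥ :=
    (hq.not_le_iff_disjoint.mp fun h => hxv (hx.trans (sup_le hpv h))).eq_bot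
  have hcov : v ⋖ q ⊔ v := covBy_sup_of_inf_covBy_left (hqv ▸ hq.bot_covBy)
  exact (hcov.eq_or_eq le_sup_right hxqv).resolve_left fun h => hxv (h ▸ le_sup_left)

namespace Submodule

variable {k E : Type*} [Field k] [AddCommGroup E] [Module k E]

theorem exists_linearEquiv_map_eq_of_finrank_eq [FiniteDimensional k E] {W₁ W₂ : Submodule k E}
    (h : finrank k W₁ = finrank k W₂) : ∃ g : E ≃ₗ[k] E, W₁.map (g : E →ₗ[k] E) = W₂ := by
  obtain ⟨g, hg⟩ := exists_linearEquiv_restrict_eq (LinearEquiv.ofFinrankEq W₁ W₂ h)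
  refine ⟨g, eq_of_le_of_finrank_eq ?_ (by rw [LinearEquiv.finrank_map_eq, h])⟩
  rintro _ ⟨w, hw, rfl⟩
  simp [← hg ⟨w, hw⟩]

theorem exists_finrank_add_one_eq_le_not_le [FiniteDimensional k E] {U W : Submodule k E}
    (hUW : ¬ U ≤ W) : ∃ H : Submodule k E, finrank k H + 1 = finrank k E ∧ W ≤ H ∧ ¬ U ≤ H := by
  obtain ⟨v, hvU, hvW⟩ := SetLike.not_le_iff_exists.mp hUW
  obtain ⟨f, hfv, hfW⟩ := exists_dual_map_eq_bot_of_notMem hvW inferInstance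
  refine ⟨LinearMap.ker f, f.finrank_ker_add_one_of_ne_zero ?_, ?_, fun hUf => hfv (hUf hvU)⟩
  · rintro rfl
    exact hfv rfl
  · exact LinearMap.le_ker_iff_map.mpr hfW

end Submodule

namespace Projectivization

variable {k E : Type*} [Field k] [AddCommGroup E] [Module k E]

theorem isAtom_submodule (x : Projectivization k E) : IsAtom x.submodule :=
  Submodule.isAtom_iff_finrank_eq_one.mpr x.finrank_submodule

theorem submodule_le_submodule_iff {x y : Projectivization k E} :
    x.submodule ≤ y.submodule ↔ x = y :=
  ⟨fun h => submodule_injective (((isAtom_submodule y).le_iff.mp h).resolve_left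
    (isAtom_submodule x).ne_bot), fun h => h ▸ le_rfl⟩

theorem finrank_submodule_sup {x y : Projectivization k E} (hxy : x ≠ y) :
    finrank k (x.submodule ⊔ y.submodule : Submodule k E) = 2 := by
  have hxy' := ((isAtom_submodule x).disjoint_of_ne (isAtom_submodule y)
    (submodule_injective.ne hxy)).eq_bot
  have := Submodule.finrank_sup_add_finrank_inf_eq x.submodule y.submodule
  rwa [hxy', finrank_bot, x.finrank_submodule, y.finrank_submodule] at this

end Projectivization

section Counting

open scoped Classical

variable {k E : Type*} [Field k] [AddCommGroup E] [Module k E] [Finite E]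

def subspacesAbove (d : ℕ) (W : Submodule k E) : Finset (Submodule k E) :=
  (Set.toFinite {H : Submodule k E | finrank k H = d ∧ W ≤ H}).toFinset

def subspacesAboveNotContaining (d : ℕ) (V W : Submodule k E) : Finset (Submodule k E) :=
  (Set.toFinite {H : Submodule k E | finrank k H = d ∧ W ≤ H ∧ ¬ V ≤ H}).toFinset

variable {d : ℕ} {V W H : Submodule k E}

@[simp]
theorem mem_subspacesAbove : H ∈ subspacesAbove d W ↔ finrank k H = d ∧ W ≤ H :=
  Set.Finite.mem_toFinset _

@[simp]
theorem mem_subspacesAboveNotContaining :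
    H ∈ subspacesAboveNotContaining d V W ↔ finrank k H = d ∧ W ≤ H ∧ ¬ V ≤ H :=
  Set.Finite.mem_toFinset _

theorem card_subspacesAbove_congr {W₁ W₂ : Submodule k E} (h : finrank k W₁ = finrank k W₂) :
    #(subspacesAbove d W₁) = #(subspacesAbove d W₂) := by
  obtain ⟨g, rfl⟩ := Submodule.exists_linearEquiv_map_eq_of_finrank_eq h
  refine Finset.card_equiv (Submodule.orderIsoMapComap g).toEquiv fun H => ?_
  simp only [mem_subspacesAbove, RelIso.coe_fn_toEquiv, Submodule.orderIsoMapComap_apply,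
    LinearEquiv.finrank_map_eq, Submodule.map_le_map_iff_of_injective g.injective]

theorem subspacesAboveNotContaining_eq_sdiff :
    subspacesAboveNotContaining d V W = subspacesAbove d W \ subspacesAbove d (W ⊔ V) := by
  ext H
  simp only [mem_subspacesAboveNotContaining, Finset.mem_sdiff, mem_subspacesAbove, sup_le_iff]
  tauto

theorem card_subspacesAboveNotContaining_congr {W₁ W₂ : Submodule k E}
    (h : finrank k W₁ = finrank k W₂) (hV : W₁ ⊔ V = W₂ ⊔ V) :
    #(subspacesAboveNotContaining d V W₁) = #(subspacesAboveNotContaining d V W₂) := by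
  have hsub (W : Submodule k E) : subspacesAbove d (W ⊔ V) ⊆ subspacesAbove d W := fun H => by
    simp only [mem_subspacesAbove, sup_le_iff]
    tauto
  rw [subspacesAboveNotContaining_eq_sdiff, subspacesAboveNotContaining_eq_sdiff,
    card_sdiff_of_subset (hsub _), card_sdiff_of_subset (hsub _), card_subspacesAbove_congr h, hV]

theorem filter_le_subspacesAboveNotContaining (U : Submodule k E) :
    {H ∈ subspacesAboveNotContaining d V W | U ≤ H} =
      subspacesAboveNotContaining d V (W ⊔ U) := by
  ext H
  simp only [Finset.mem_filter, mem_subspacesAboveNotContaining, sup_le_iff]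
  tauto

theorem sum_card_filter_le_eq_sum_card_subspacesAboveNotContaining
    (K : Finset (Projectivization k E)) :
    ∑ H ∈ subspacesAboveNotContaining d V W, #{y ∈ K | y.submodule ≤ H} =
      ∑ y ∈ K, #(subspacesAboveNotContaining d V (W ⊔ y.submodule)) := by
  simp_rw [← filter_le_subspacesAboveNotContaining]
  exact sum_card_bipartiteAbove_eq_sum_card_bipartiteBelow _

theorem card_subspacesAboveNotContaining_sup_lt (hd : finrank k E = d + 1)
    {x Q : Projectivization k E} (hxQ : x ≠ Q) (hsup : x.submodule ⊔ V = Q.submodule ⊔ V) :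
    #(subspacesAboveNotContaining d V (x.submodule ⊔ Q.submodule)) <
      #(subspacesAboveNotContaining d V Q.submodule) := by
  obtain ⟨H, hH, hQH, hxH⟩ := Submodule.exists_finrank_add_one_eq_le_not_le
    (mt Projectivization.submodule_le_submodule_iff.mp hxQ)
  have hVH : ¬ V ≤ H := fun hVH => hxH (le_sup_left.trans (hsup.trans_le (sup_le hQH hVH)))
  rw [sup_comm, ← filter_le_subspacesAboveNotContaining]
  refine card_lt_card (Finset.filter_ssubset.mpr ⟨H, ?_, hxH⟩)
  rw [mem_subspacesAboveNotContaining]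
  exact ⟨by omega, hQH, hVH⟩

theorem mem_of_sup_eq_of_forall_card_eq (hd : finrank k E = d + 1)
    {K : Finset (Projectivization k E)} {t : ℕ}
    (hK : ∀ H : Submodule k E, finrank k H = d → ¬ V ≤ H → #{y ∈ K | y.submodule ≤ H} = t)
    {x Q : Projectivization k E} (hQ : Q ∈ K) (hsup : x.submodule ⊔ V = Q.submodule ⊔ V) :
    x ∈ K := by
  by_contra hxK
  have hxQ : x ≠ Q := (ne_of_mem_of_not_mem hQ hxK).symm
  have hsum (R : Projectivization k E) :
      ∑ y ∈ K, #(subspacesAboveNotContaining d V (R.submodule ⊔ y.submodule)) =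
        t * #(subspacesAboveNotContaining d V R.submodule) := by
    rw [← sum_card_filter_le_eq_sum_card_subspacesAboveNotContaining, sum_const_nat fun H hH => ?_,
      mul_comm]
    rw [mem_subspacesAboveNotContaining] at hH
    exact hK H hH.1 hH.2.2
  have hlt : ∑ y ∈ K, #(subspacesAboveNotContaining d V (x.submodule ⊔ y.submodule)) <
      ∑ y ∈ K, #(subspacesAboveNotContaining d V (Q.submodule ⊔ y.submodule)) := by
    refine sum_lt_sum (fun y hy => ?_) ⟨Q, hQ, ?_⟩
    · rcases eq_or_ne y Q with rfl | hyQ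
      · rw [sup_idem]
        exact (card_subspacesAboveNotContaining_sup_lt hd hxQ hsup).le
      · refine (card_subspacesAboveNotContaining_congr ?_ ?_).le
        · rw [Projectivization.finrank_submodule_sup (ne_of_mem_of_not_mem hy hxK).symm,
            Projectivization.finrank_submodule_sup hyQ.symm]
        · rw [sup_right_comm, hsup, sup_right_comm]
    · rw [sup_idem]
      exact card_subspacesAboveNotContaining_sup_lt hd hxQ hsup
  rw [hsum, hsum, card_subspacesAboveNotContaining_congr
    (by simp [Projectivization.finrank_submodule]) hsup] at hlt
  exact lt_irrefl _ hlt

end Counting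

theorem statement9 [Fintype F] (n t : ℕ)
    (Wv : Submodule F (Fin (n + 1) → F))
    (K : Set (PGPoint F n))
    (hconst : ∀ W : Submodule F (Fin (n + 1) → F), finrank F W = n →
      ¬ Wv ≤ W → (K ∩ projSet F n W).ncard = t) :
    ∀ P ∈ projSet F n Wv, ∀ Q ∈ K ∪ projSet F n Wv, ∀ x : PGPoint F n,
      x.submodule ≤ P.submodule ⊔ Q.submodule → x ∈ K ∪ projSet F n Wv := by
  classical
  intro P hP Q hQ x hx
  by_cases hxV : x.submodule ≤ Wv
  · exact Or.inr hxV
  have hQV : ¬ Q.submodule ≤ Wv := fun hQV => hxV (hx.trans (sup_le hP hQV))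
  have hsup := (Projectivization.isAtom_submodule Q).sup_eq_sup_of_le_sup hP hx hxV
  have hQK : Q ∈ K.toFinite.toFinset := (Set.Finite.mem_toFinset _).mpr (hQ.resolve_right hQV)
  have hcard (H : Submodule F (Fin (n + 1) → F)) (hH : finrank F H = n) (hV : ¬ Wv ≤ H) :
      #{y ∈ K.toFinite.toFinset | y.submodule ≤ H} = t := by
    rw [← hconst H hH hV, ← Set.ncard_coe_finset, Finset.coe_filter]
    congr 1
    ext y
    simp [projSet]
  exact Or.inl ((Set.Finite.mem_toFinset _).mp
    (mem_of_sup_eq_of_forall_card_eq (by simp) hcard hQK hsup))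
end
end

section
/- In PG(n,q), with n ≥ 4 and q a square prime power, let K be an (n−1)-blocking set of type (a,b,c)_{n-1} with a = θ_{n-2}, b = θ_{n-3} + (√q)^{2n−3} and c = θ_{n-2} + (√q)^{2n−3}, and suppose k = θ_{n-2} + (√q)^{2n−1}. Let π be a hyperplane with |K ∩ π| = a and let α = K ∩ π (which is an (n−2)-dimensional subspace). Then among the q+1 hyperplanes of PG(n,q) containing α, exactly one (namely π) meets K in a points, none meets K in b points, and exactly q meet K in c points. -/
/-!
Put `α = K ∩ π`. Every line of `π` meets `K`, so `α` blocks the lines of `π ≅ PG(n-1,q)`, and it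
has only `θ_{n-2}` points. If a point `z ∉ α` lay on a line joining two points of `α`, projecting
from `z` would inject a hyperplane of `π` (with `θ_{n-2}` points) into `α` minus a point; hence `α`
is closed under lines, i.e. a subspace, of dimension `n-2` by counting. The `q+1` hyperplanes
through `α` partition the points of `K` outside `α`, so their excesses `|K ∩ W| - θ_{n-2}` add up to
`k - θ_{n-2} = q·√q^{2n-3}`. Each excess is at most `c - a = √q^{2n-3}` and that of `π` is `0`, so
all `q` others are `c`-hyperplanes.
-/

open Module Set

noncomputable section

variable (F : Type) [Field F]

/-- `K` blocks every `t`-dimensional projective subspace of `PG(n,q)`,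
i.e. `K` is an `(n-t)`-blocking set. -/
def BlocksDim (n t : ℕ) (K : Set (PGPoint F n)) : Prop :=
  ∀ W : Submodule F (Fin (n + 1) → F), finrank F W = t + 1 → (K ∩ projSet F n W).Nonempty

open Projectivization
open scoped LinearAlgebra.Projectivization
open Submodule (mem_projectivization_iff_submodule_le)

lemma theta_eq_sum_range {q : ℕ} (hq : 2 ≤ q) (m : ℕ) :
    theta q m = ∑ i ∈ Finset.range (m + 1), q ^ i :=
  (Nat.geomSum_eq hq _).symm

lemma theta_succ {q : ℕ} (hq : 2 ≤ q) (m : ℕ) :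
    theta q (m + 1) = theta q m + q ^ (m + 1) := by
  rw [theta_eq_sum_range hq, theta_eq_sum_range hq, Finset.sum_range_succ]

lemma strictMono_sum_range_pow {q : ℕ} (hq : 1 ≤ q) :
    StrictMono fun m => ∑ i ∈ Finset.range m, q ^ i :=
  strictMono_nat_of_lt_succ fun m => by
    rw [Finset.sum_range_succ]
    exact Nat.lt_add_of_pos_right (by positivity)

lemma eq_of_mul_le_finsum_mem {ι : Type*} {s : Set ι} (hs : s.Finite) {f : ι → ℕ} {m : ℕ}
    (hle : ∀ i ∈ s, f i ≤ m) {i₀ : ι} (hi₀ : i₀ ∈ s) (hf₀ : f i₀ = 0)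
    (hsum : (s.ncard - 1) * m ≤ ∑ᶠ i ∈ s, f i) : ∀ i ∈ s, i ≠ i₀ → f i = m := by
  classical
  have hle' : ∀ i ∈ hs.toFinset.erase i₀, f i ≤ m := fun i hi =>
    hle i (hs.mem_toFinset.1 (Finset.mem_of_mem_erase hi))
  have hsum' : ∑ i ∈ hs.toFinset.erase i₀, f i = ∑ i ∈ hs.toFinset.erase i₀, m := by
    refine le_antisymm (Finset.sum_le_sum hle') ?_
    rwa [finsum_mem_eq_finite_toFinset_sum f hs,
      ← Finset.add_sum_erase _ _ (hs.mem_toFinset.2 hi₀), hf₀, zero_add,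
      Set.ncard_eq_toFinset_card s hs, ← Finset.card_erase_of_mem (hs.mem_toFinset.2 hi₀),
      ← smul_eq_mul, ← Finset.sum_const] at hsum
  exact fun i hi hne => (Finset.sum_eq_sum_iff_of_le hle').1 hsum' i
    (Finset.mem_erase.2 ⟨hne, hs.mem_toFinset.2 hi⟩)

section Lattice

variable {F}
variable {V : Type*} [AddCommGroup V] [Module F V]

def IsLineClosed (S : Set (ℙ F V)) : Prop :=
  ∀ x ∈ S, ∀ y ∈ S, ∀ z : ℙ F V, z.submodule ≤ x.submodule ⊔ y.submodule → z ∈ S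

lemma IsLineClosed.exists_projectivization_eq {S : Set (ℙ F V)} (hS : IsLineClosed S) :
    ∃ U : Submodule F V, (U.projectivization : Set (ℙ F V)) = S := by
  let T : Projectivization.Subspace F V :=
    { carrier := S
      mem_add' := fun v w hv hw hvw hvS hwS => hS _ hvS _ hwS _ <| by
        simp only [submodule_mk, Submodule.span_singleton_le_iff_mem]
        exact Submodule.add_mem_sup (Submodule.mem_span_singleton_self v)
          (Submodule.mem_span_singleton_self w) }
  refine ⟨Subspace.submodule T, ?_⟩
  simp only [Submodule.projectivization, OrderIso.symm_apply_apply]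
  rfl

lemma inf_submodule_eq_bot {A : Submodule F V} {x : ℙ F V} (hxA : ¬ x.submodule ≤ A) :
    A ⊓ x.submodule = ⊥ := by
  rw [← disjoint_iff, x.submodule_eq, Submodule.disjoint_span_singleton' x.rep_nonzero]
  rwa [x.submodule_eq, Submodule.span_singleton_le_iff_mem] at hxA

def upperCovers (A : Submodule F V) : Set (Submodule F V) :=
  {W | finrank F W = finrank F A + 1 ∧ A ≤ W}

lemma eq_of_sup_submodule_eq {H : Submodule F V} {z w₁ w₂ : ℙ F V} (hz : ¬ z.submodule ≤ H)
    (h₁ : w₁.submodule ≤ H) (h₂ : w₂.submodule ≤ H)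
    (h : z.submodule ⊔ w₁.submodule = z.submodule ⊔ w₂.submodule) : w₁ = w₂ := by
  have hproj (w : ℙ F V) (hw : w.submodule ≤ H) :
      (z.submodule ⊔ w.submodule) ⊓ H = w.submodule := by
    rw [sup_comm, sup_inf_assoc_of_le _ hw, inf_comm, inf_submodule_eq_bot hz, sup_bot_eq]
  exact submodule_injective (by rw [← hproj w₁ h₁, ← hproj w₂ h₂, h])

variable [FiniteDimensional F V]

lemma finrank_sup_submodule {A : Submodule F V} {x : ℙ F V} (hxA : ¬ x.submodule ≤ A) :
    finrank F ↥(A ⊔ x.submodule) = finrank F A + 1 := by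
  have := Submodule.finrank_sup_add_finrank_inf_eq A x.submodule
  rwa [inf_submodule_eq_bot hxA, finrank_bot, add_zero, x.finrank_submodule] at this

lemma eq_sup_submodule {A W : Submodule F V} {x : ℙ F V} (hAW : A ≤ W)
    (hW : finrank F W = finrank F A + 1) (hxW : x.submodule ≤ W) (hxA : ¬ x.submodule ≤ A) :
    W = A ⊔ x.submodule :=
  (Submodule.eq_of_le_of_finrank_eq (sup_le hAW hxW) (by rw [finrank_sup_submodule hxA, hW])).symm

lemma finrank_sup_submodule_eq_two {x y : ℙ F V} (hxy : x ≠ y) :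
    finrank F ↥(x.submodule ⊔ y.submodule) = 2 := by
  refine (finrank_sup_submodule fun h => hxy ?_).trans (by rw [x.finrank_submodule])
  exact (submodule_injective
    (Submodule.eq_of_le_of_finrank_eq h (by rw [x.finrank_submodule, y.finrank_submodule]))).symm

lemma sup_submodule_eq_of_le_sup {x y z : ℙ F V} (hxy : x ≠ y) (hxz : x ≠ z)
    (hz : z.submodule ≤ x.submodule ⊔ y.submodule) :
    x.submodule ⊔ z.submodule = x.submodule ⊔ y.submodule :=
  Submodule.eq_of_le_of_finrank_eq (sup_le le_sup_left hz)
    (by rw [finrank_sup_submodule_eq_two hxz, finrank_sup_submodule_eq_two hxy])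

lemma exists_le_not_le_finrank_add_one {E : Submodule F V} {z : ℙ F V} (hz : z.submodule ≤ E) :
    ∃ H ≤ E, ¬ z.submodule ≤ H ∧ finrank F H + 1 = finrank F E := by
  obtain ⟨C, hC⟩ := Submodule.exists_isCompl z.submodule
  have hzC : ¬ z.submodule ≤ C ⊓ E := fun h => by
    have hbot : z.submodule = ⊥ := (inf_eq_left.2 (h.trans inf_le_left)).symm.trans hC.inf_eq_bot
    have h1 := z.finrank_submodule
    rw [hbot, finrank_bot] at h1
    exact zero_ne_one h1
  refine ⟨C ⊓ E, inf_le_right, hzC, ?_⟩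
  rw [← finrank_sup_submodule hzC, sup_comm, ← sup_inf_assoc_of_le C hz, hC.sup_eq_top,
    top_inf_eq]

lemma exists_injective_projection_of_blocks {E H : Submodule F V} {S : Set (ℙ F V)} {z : ℙ F V}
    (hblock : ∀ L ≤ E, finrank F L = 2 → ∃ x ∈ S, x.submodule ≤ L)
    (hzE : z.submodule ≤ E) (hzS : z ∉ S) (hHE : H ≤ E) (hzH : ¬ z.submodule ≤ H) :
    ∃ ψ : ↥(H.projectivization : Set (ℙ F V)) → ℙ F V, Function.Injective ψ ∧ (∀ w, ψ w ∈ S) ∧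
      ∀ w, z.submodule ⊔ (ψ w).submodule = z.submodule ⊔ w.1.submodule := by
  have hwH (w : (H.projectivization : Set (ℙ F V))) : w.1.submodule ≤ H :=
    (mem_projectivization_iff_submodule_le H w).1 w.2
  have hzw (w : (H.projectivization : Set (ℙ F V))) : z ≠ w.1 := fun h => hzH (h ▸ hwH w)
  have hψ (w : (H.projectivization : Set (ℙ F V))) :
      ∃ s ∈ S, s.submodule ≤ z.submodule ⊔ w.1.submodule :=
    hblock _ (sup_le hzE ((hwH w).trans hHE)) (finrank_sup_submodule_eq_two (hzw w))
  choose ψ hψS hψ using hψ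
  have hline (w : (H.projectivization : Set (ℙ F V))) :
      z.submodule ⊔ (ψ w).submodule = z.submodule ⊔ w.1.submodule :=
    sup_submodule_eq_of_le_sup (hzw w) (fun h => hzS (h ▸ hψS w)) (hψ w)
  refine ⟨ψ, fun w₁ w₂ h => Subtype.ext ?_, hψS, hline⟩
  exact eq_of_sup_submodule_eq hzH (hwH w₁) (hwH w₂) (by rw [← hline, ← hline, h])

end Lattice

section Counting

variable {F}
variable {V : Type*} [AddCommGroup V] [Module F V]

lemma ncard_projectivization [Finite F] (W : Submodule F V) :
    (W.projectivization : Set (ℙ F V)).ncard =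
      ∑ i ∈ Finset.range (finrank F W), Nat.card F ^ i := by
  have hrange : Set.range (Projectivization.map W.subtype W.injective_subtype) =
      W.projectivization := by
    refine Set.Subset.antisymm ?_ fun x hx => ?_
    · rintro _ ⟨y, rfl⟩
      induction y using Projectivization.ind with
      | h v hv => exact v.2
    · rw [← x.mk_rep] at hx ⊢
      exact ⟨mk F ⟨x.rep, hx⟩ fun h => x.rep_nonzero (congrArg Subtype.val h), rfl⟩
  rw [← hrange, Set.ncard_range_of_injective (Projectivization.map_injective _ _),
    Projectivization.card_of_finrank F W rfl]

variable [Finite V]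

lemma finite_upperCovers (A : Submodule F V) : (upperCovers A).Finite :=
  have : Finite (Submodule F V) := Finite.of_injective _ SetLike.coe_injective
  Set.toFinite _

/-- The covers of `A` partition the points outside `A`: `x ∉ A` lies only in `A ⊔ x`. -/
lemma ncard_sdiff_eq_finsum_upperCovers (A : Submodule F V) (X : Set (ℙ F V)) :
    (X \ A.projectivization).ncard =
      ∑ᶠ W ∈ upperCovers A, ((X ∩ W.projectivization) \ A.projectivization).ncard := by
  have hunion : X \ A.projectivization =
      ⋃ W ∈ upperCovers A, (X ∩ W.projectivization) \ A.projectivization := by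
    ext x
    simp only [Set.mem_sdiff, Set.mem_iUnion, Set.mem_inter_iff, SetLike.mem_coe,
      mem_projectivization_iff_submodule_le, exists_prop]
    constructor
    · rintro ⟨hxX, hxA⟩
      exact ⟨A ⊔ x.submodule, ⟨finrank_sup_submodule hxA, le_sup_left⟩, ⟨hxX, le_sup_right⟩,
        hxA⟩
    · rintro ⟨W, -, ⟨hxX, -⟩, hxA⟩
      exact ⟨hxX, hxA⟩
  rw [hunion, (finite_upperCovers A).ncard_biUnion (fun _ _ => Set.toFinite _)]
  intro W₁ hW₁ W₂ hW₂ hne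
  refine Set.disjoint_left.2 fun x ⟨⟨_, hx₁⟩, hxA⟩ ⟨⟨_, hx₂⟩, _⟩ => hne ?_
  simp only [SetLike.mem_coe, mem_projectivization_iff_submodule_le] at hx₁ hx₂ hxA
  rw [eq_sup_submodule hW₁.2 hW₁.1 hx₁ hxA, eq_sup_submodule hW₂.2 hW₂.1 hx₂ hxA]

lemma ncard_inter_eq_of_ncard_le {A : Submodule F V} {K : Set (ℙ F V)} {a m : ℕ}
    (hAK : (A.projectivization : Set (ℙ F V)) ⊆ K)
    (hA : (A.projectivization : Set (ℙ F V)).ncard = a)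
    (hle : ∀ W ∈ upperCovers A, (K ∩ W.projectivization).ncard ≤ a + m)
    {W₀ : Submodule F V} (hW₀ : W₀ ∈ upperCovers A)
    (hW₀K : (K ∩ W₀.projectivization).ncard = a)
    (hK : ((upperCovers A).ncard - 1) * m ≤ K.ncard - a) :
    ∀ W ∈ upperCovers A, W ≠ W₀ → (K ∩ W.projectivization).ncard = a + m := by
  have hsub (W : Submodule F V) (hW : W ∈ upperCovers A) :
      (A.projectivization : Set (ℙ F V)) ⊆ K ∩ W.projectivization :=
    Set.subset_inter hAK (SetLike.coe_subset_coe.2 (Submodule.projectivization.monotone hW.2))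
  have hterm (W : Submodule F V) (hW : W ∈ upperCovers A) :
      ((K ∩ W.projectivization) \ A.projectivization).ncard =
        (K ∩ W.projectivization).ncard - a := by
    rw [Set.ncard_sdiff (hsub W hW), hA]
  have hfull := eq_of_mul_le_finsum_mem (finite_upperCovers A)
    (f := fun W => ((K ∩ W.projectivization) \ A.projectivization).ncard) (m := m)
    (fun W hW => by have := hle W hW; rw [hterm W hW]; omega) hW₀
    (by rw [hterm W₀ hW₀, hW₀K, Nat.sub_self])
    (by rwa [← ncard_sdiff_eq_finsum_upperCovers, Set.ncard_sdiff hAK, hA])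
  intro W hW hne
  have h₁ := hfull W hW hne
  have h₂ := Set.ncard_le_ncard (hsub W hW)
  rw [hterm W hW] at h₁
  omega

variable [Finite F]

/-- A point `z ∉ S` on a secant line of `S` would give, by projecting from `z` onto a hyperplane
of `E`, an injection of that hyperplane into `S` missing a point of `S`. -/
lemma isLineClosed_of_blocks {E : Submodule F V} {S : Set (ℙ F V)}
    (hSE : S ⊆ E.projectivization)
    (hblock : ∀ L ≤ E, finrank F L = 2 → ∃ x ∈ S, x.submodule ≤ L)
    (hcard : S.ncard ≤ ∑ i ∈ Finset.range (finrank F E - 1), Nat.card F ^ i) :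
    IsLineClosed S := by
  intro x hx y hy z hz
  by_contra hzS
  have hzx : z ≠ x := fun h => hzS (h ▸ hx)
  have hzy : z ≠ y := fun h => hzS (h ▸ hy)
  have hxy : x ≠ y := by
    rintro rfl
    rw [sup_idem] at hz
    exact hzx (submodule_injective (Submodule.eq_of_le_of_finrank_eq hz
      (by rw [z.finrank_submodule, x.finrank_submodule])))
  have hSE' : ∀ s ∈ S, s.submodule ≤ E := fun s hs =>
    (mem_projectivization_iff_submodule_le E s).1 (hSE hs)
  have hzE : z.submodule ≤ E := hz.trans (sup_le (hSE' x hx) (hSE' y hy))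
  obtain ⟨H, hHE, hzH, hH⟩ := exists_le_not_le_finrank_add_one hzE
  obtain ⟨ψ, hinj, hψS, hline⟩ :=
    exists_injective_projection_of_blocks hblock hzE hzS hHE hzH
  have hPH (w : (H.projectivization : Set (ℙ F V))) : w.1.submodule ≤ H :=
    (mem_projectivization_iff_submodule_le H w).1 w.2
  -- `x` and `y` lie on the same line through `z`, so `ψ` cannot hit both
  obtain ⟨s, hsS, hsψ⟩ : ∃ s ∈ S, s ∉ Set.range ψ := by
    by_contra! h
    obtain ⟨w₁, rfl⟩ := h x hx
    obtain ⟨w₂, rfl⟩ := h y hy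
    refine hxy (congrArg ψ (Subtype.ext (eq_of_sup_submodule_eq hzH (hPH w₁) (hPH w₂) ?_)))
    calc z.submodule ⊔ w₁.1.submodule = z.submodule ⊔ (ψ w₁).submodule := (hline w₁).symm
      _ = (ψ w₁).submodule ⊔ (ψ w₂).submodule := by
        rw [sup_comm]; exact sup_submodule_eq_of_le_sup hxy hzx.symm hz
      _ = z.submodule ⊔ (ψ w₂).submodule := by
        rw [sup_comm z.submodule, sup_comm (ψ w₁).submodule]
        exact (sup_submodule_eq_of_le_sup hxy.symm hzy.symm
          (sup_comm (ψ w₁).submodule _ ▸ hz)).symm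
      _ = z.submodule ⊔ w₂.1.submodule := hline w₂
  have hle : Nat.card (H.projectivization : Set (ℙ F V)) ≤ Nat.card ↥(S \ {s}) :=
    Nat.card_le_card_of_injective (fun w => ⟨ψ w, hψS w, fun h => hsψ ⟨w, h⟩⟩)
      fun w₁ w₂ h => hinj (congrArg Subtype.val h)
  rw [Nat.card_coe_set_eq, Nat.card_coe_set_eq, Set.ncard_sdiff_singleton_of_mem hsS,
    ncard_projectivization, show finrank F H = finrank F E - 1 by omega] at hle
  have := (Set.ncard_pos (Set.toFinite S)).2 ⟨x, hx⟩
  omega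

lemma exists_projectivization_eq_of_blocks {E : Submodule F V} {S : Set (ℙ F V)}
    (hSE : S ⊆ E.projectivization)
    (hblock : ∀ L ≤ E, finrank F L = 2 → ∃ x ∈ S, x.submodule ≤ L)
    (hcard : S.ncard = ∑ i ∈ Finset.range (finrank F E - 1), Nat.card F ^ i) :
    ∃ U : Submodule F V, finrank F U = finrank F E - 1 ∧
      (U.projectivization : Set (ℙ F V)) = S := by
  obtain ⟨U, hU⟩ := (isLineClosed_of_blocks hSE hblock hcard.le).exists_projectivization_eq
  refine ⟨U, (strictMono_sum_range_pow (Finite.one_lt_card (α := F)).le).injective ?_, hU⟩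
  rw [← ncard_projectivization, hU, hcard]

lemma ncard_upperCovers {A : Submodule F V} (hA : finrank F A + 2 = finrank F V) :
    (upperCovers A).ncard = Nat.card F + 1 := by
  set q := Nat.card F
  set r := finrank F A
  have hterm : ∀ W ∈ upperCovers A,
      (((Set.univ : Set (ℙ F V)) ∩ W.projectivization) \ A.projectivization).ncard = q ^ r := by
    rintro W ⟨hW, hAW⟩
    rw [Set.univ_inter, Set.ncard_sdiff (SetLike.coe_subset_coe.2
      (Submodule.projectivization.monotone hAW)), ncard_projectivization,
      ncard_projectivization, hW, Finset.sum_range_succ, Nat.add_sub_cancel_left]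
  have h := ncard_sdiff_eq_finsum_upperCovers A Set.univ
  rw [finsum_mem_congr rfl hterm, finsum_mem_eq_finite_toFinset_sum _ (finite_upperCovers A),
    Finset.sum_const, smul_eq_mul, ← Set.ncard_eq_toFinset_card _ (finite_upperCovers A),
    Set.ncard_sdiff (Set.subset_univ _), Set.ncard_univ,
    Projectivization.card_of_finrank F V hA.symm, ncard_projectivization,
    Finset.sum_range_succ, Finset.sum_range_succ, add_assoc, Nat.add_sub_cancel_left] at h
  refine Nat.eq_of_mul_eq_mul_right (pow_pos (Nat.card_pos (α := F)) r) ?_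
  rw [← h, pow_succ]
  ring

theorem exists_upperCovers_ncard_inter_of_blocks {E : Submodule F V} {K : Set (ℙ F V)} {m : ℕ}
    (hE : finrank F E + 1 = finrank F V) (hE₁ : 1 ≤ finrank F E) (hm : 0 < m)
    (hblock : ∀ L : Submodule F V, finrank F L = 2 → ∃ x ∈ K, x.submodule ≤ L)
    (hKE : (K ∩ E.projectivization).ncard =
      ∑ i ∈ Finset.range (finrank F E - 1), Nat.card F ^ i)
    (hle : ∀ W : Submodule F V, finrank F W = finrank F E →
      (K ∩ W.projectivization).ncard ≤ (K ∩ E.projectivization).ncard + m)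
    (hK : Nat.card F * m ≤ K.ncard - (K ∩ E.projectivization).ncard) :
    ∃ U : Submodule F V, finrank F U + 1 = finrank F E ∧
      (U.projectivization : Set (ℙ F V)) = K ∩ E.projectivization ∧
      (upperCovers U).ncard = Nat.card F + 1 ∧
      {W ∈ upperCovers U | (K ∩ W.projectivization).ncard =
        (K ∩ E.projectivization).ncard} = {E} ∧
      {W ∈ upperCovers U | (K ∩ W.projectivization).ncard =
        (K ∩ E.projectivization).ncard + m}.ncard = Nat.card F ∧
      ∀ W ∈ upperCovers U, (K ∩ W.projectivization).ncard = (K ∩ E.projectivization).ncard ∨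
        (K ∩ W.projectivization).ncard = (K ∩ E.projectivization).ncard + m := by
  obtain ⟨U, hU, hUK⟩ := exists_projectivization_eq_of_blocks Set.inter_subset_right
    (fun L hLE hL => by
      obtain ⟨x, hxK, hxL⟩ := hblock L hL
      exact ⟨x, ⟨hxK, (mem_projectivization_iff_submodule_le E x).2 (hxL.trans hLE)⟩, hxL⟩)
    hKE
  have hEU : E ∈ upperCovers U := ⟨by omega, Submodule.projectivization.le_iff_le.1
    (SetLike.coe_subset_coe.1 (hUK ▸ Set.inter_subset_right))⟩
  have hcard := ncard_upperCovers (A := U) (by omega)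
  have hc := ncard_inter_eq_of_ncard_le (hUK ▸ Set.inter_subset_left) (congrArg Set.ncard hUK)
    (fun W hW => hle W (by rw [hW.1, hEU.1])) hEU rfl (by rwa [hcard, Nat.add_sub_cancel])
  have hsplit : {W ∈ upperCovers U | (K ∩ W.projectivization).ncard =
      (K ∩ E.projectivization).ncard + m} = upperCovers U \ {E} := by
    ext W
    refine and_congr_right fun hW => ⟨fun h hWE => ?_, hc W hW⟩
    rw [hWE] at h
    omega
  refine ⟨U, by omega, hUK, hcard, ?_, ?_, fun W hW => ?_⟩
  · ext W
    refine ⟨fun ⟨hW, h⟩ => by_contra fun hWE => ?_, fun hWE => by subst hWE; exact ⟨hEU, rfl⟩⟩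
    have := hc W hW hWE
    omega
  · rw [hsplit, Set.ncard_sdiff_singleton_of_mem hEU, hcard, Nat.add_sub_cancel]
  · by_cases hWE : W = E
    exacts [Or.inl (hWE ▸ rfl), Or.inr (hc W hW hWE)]

end Counting

section PG

variable {F}

lemma projSet_eq {n : ℕ} (W : Submodule F (Fin (n + 1) → F)) :
    projSet F n W = W.projectivization :=
  Set.ext fun x => (mem_projectivization_iff_submodule_le W x).symm

end PG

theorem statement16 [Fintype F] (p e q sq n : ℕ)
    (hqdef : q = p ^ (2 * e)) (hsq : sq = p ^ e) (hq : Fintype.card F = q)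
    (hn : 4 ≤ n)
    (K : Set (PGPoint F n)) (hblock : BlocksDim F n 1 K)
    (hK : IsType3 F n K (theta q (n - 2)) (theta q (n - 3) + sq ^ (2 * n - 3))
      (theta q (n - 2) + sq ^ (2 * n - 3)))
    (hk : K.ncard = theta q (n - 2) + sq ^ (2 * n - 1))
    (Wπ : Submodule F (Fin (n + 1) → F)) (hWπ : finrank F Wπ = n)
    (hπa : (K ∩ projSet F n Wπ).ncard = theta q (n - 2)) :
    (∃ Wα : Submodule F (Fin (n + 1) → F),
      finrank F Wα = n - 1 ∧ K ∩ projSet F n Wπ = projSet F n Wα) ∧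
    {W : Submodule F (Fin (n + 1) → F) | finrank F W = n ∧
      K ∩ projSet F n Wπ ⊆ projSet F n W}.ncard = q + 1 ∧
    {W : Submodule F (Fin (n + 1) → F) | finrank F W = n ∧
      K ∩ projSet F n Wπ ⊆ projSet F n W ∧
      (K ∩ projSet F n W).ncard = theta q (n - 2)} = {Wπ} ∧
    {W : Submodule F (Fin (n + 1) → F) | finrank F W = n ∧
      K ∩ projSet F n Wπ ⊆ projSet F n W ∧
      (K ∩ projSet F n W).ncard = theta q (n - 3) + sq ^ (2 * n - 3)}.ncard = 0 ∧
    {W : Submodule F (Fin (n + 1) → F) | finrank F W = n ∧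
      K ∩ projSet F n Wπ ⊆ projSet F n W ∧
      (K ∩ projSet F n W).ncard = theta q (n - 2) + sq ^ (2 * n - 3)}.ncard = q := by
  have hqF : Nat.card F = q := Nat.card_eq_fintype_card.trans hq
  have hq2 : 2 ≤ q := hqF ▸ Finite.one_lt_card
  have hq' : q = sq ^ 2 := by rw [hqdef, hsq, ← pow_mul, mul_comm]
  have hsq2 : 1 < sq := lt_of_pow_lt_pow_left₀ 2 (by positivity) (by rw [← hq']; omega)
  have hab : theta q (n - 2) = theta q (n - 3) + q ^ (n - 2) := by
    have := theta_succ hq2 (n - 3); rwa [show n - 3 + 1 = n - 2 by omega] at this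
  have hq0 : 0 < q ^ (n - 2) := by positivity
  have hM : q ^ (n - 2) < sq ^ (2 * n - 3) := by
    rw [hq', ← pow_mul]; exact Nat.pow_lt_pow_right hsq2 (by omega)
  have hkM : sq ^ (2 * n - 1) = q * sq ^ (2 * n - 3) := by
    rw [hq', ← pow_add]; congr 1; omega
  have htype (W : Submodule F (Fin (n + 1) → F)) (hW : finrank F W = n) :=
    (projSet_eq W).symm ▸ hK.1 W hW
  simp only [projSet_eq] at hπa ⊢
  obtain ⟨U, hU, hUK, hcard, ha, hc, hac⟩ :=
    exists_upperCovers_ncard_inter_of_blocks (m := sq ^ (2 * n - 3))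
    (by rw [hWπ, Module.finrank_fin_fun]) (by omega) (by omega) (fun L hL => hblock L hL)
    (by rw [hπa, theta_eq_sum_range hq2, hWπ, hqF, show n - 2 + 1 = n - 1 by omega])
    (fun W hW => by rcases htype W (hW.trans hWπ) with h | h | h <;> omega)
    (by rw [hk, hπa, hkM, hqF, Nat.add_sub_cancel_left])
  have hcovers (W : Submodule F (Fin (n + 1) → F)) :
      finrank F W = n ∧ K ∩ Wπ.projectivization ⊆ W.projectivization ↔
        W ∈ upperCovers U := by
    rw [← hUK, SetLike.coe_subset_coe, Submodule.projectivization.le_iff_le, upperCovers,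
      Set.mem_ofPred_eq, hU, hWπ]
  have hcovers' (W : Submodule F (Fin (n + 1) → F)) (P : Prop) :
      (finrank F W = n ∧ K ∩ Wπ.projectivization ⊆ W.projectivization ∧ P) ↔
        W ∈ upperCovers U ∧ P := by
    rw [← and_assoc, hcovers]
  simp only [hcovers, hcovers', hπa] at ha hc hac ⊢
  refine ⟨⟨U, by omega, hUK.symm⟩, hqF ▸ hcard, ha, ?_, hqF ▸ hc⟩
  refine (Set.ncard_eq_zero (Set.toFinite _)).2 (Set.eq_empty_of_forall_notMem fun W ⟨hW, hb⟩ => ?_)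
  rcases hac W hW with h | h <;> omega
end
end
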